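/- arXiv:2407.18852 — 2 statements merged into one kernel-verified Lean document; each statement's English description precedes it below -/
import Mathlib

section
/- Let A : ℝ → Matrix (Fin n) (Fin n) ℝ be continuous, let σ ∈ Matrix (Fin n) (Fin m) ℝ, let t₀ ∈ ℝ and let P₀ ∈ Matrix (Fin n) (Fin n) ℝ. Suppose Φ : ℝ → ℝ → Matrix (Fin n) (Fin n) ℝ is jointly continuous and, for every s, the map t ↦ Φ(t,s) is differentiable with ∂ₜΦ(t,s) = A(t) · Φ(t,s) and Φ(s,s) = I. Define P(t) = Φ(t,t₀) · P₀ · Φ(t,t₀)ᵀ + ∫_{t₀}^{t} Φ(t,s) · (σ·σᵀ) · Φ(t,s)ᵀ ds. Then P is differentiable on ℝ, P(t₀) = P₀, and P satisfies the matrix Lyapunov differential equation P'(t) = A(t)·P(t) + P(t)·A(t)ᵀ + σ·σᵀ for all t. -/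
open Matrix intervalIntegral Set

attribute [local instance] Matrix.normedAddCommGroup Matrix.normedSpace

theorem hasDerivAt_matrix {n : ℕ} {f : ℝ → Matrix (Fin n) (Fin n) ℝ}
    {f' : Matrix (Fin n) (Fin n) ℝ} {t : ℝ} :
    HasDerivAt f f' t ↔ ∀ i j, HasDerivAt (fun τ => f τ i j) (f' i j) t := by
  constructor
  · intro h i j
    exact hasDerivAt_pi.1 (hasDerivAt_pi.1 h i) j
  · intro h
    exact hasDerivAt_pi.2 fun i => hasDerivAt_pi.2 (h i)

theorem phi_factor {n : ℕ}
    (A : ℝ → Matrix (Fin n) (Fin n) ℝ) (hA : Continuous A) (t₀ : ℝ)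
    (Φ : ℝ → ℝ → Matrix (Fin n) (Fin n) ℝ)
    (hΦderiv : ∀ s t, ∀ i j : Fin n,
      HasDerivAt (fun τ => Φ τ s i j) ((A t * Φ t s) i j) t)
    (hΦid : ∀ s : ℝ, Φ s s = 1) :
    ∀ t1 s0 : ℝ, Φ t1 s0 = Φ t1 t₀ * Φ t₀ s0 := by
  intro t1 s0
  set a : ℝ := min t₀ t1 - 1 with ha
  set b : ℝ := max t₀ t1 + 1 with hb
  have hminmax : min t₀ t1 ≤ max t₀ t1 := le_trans (min_le_left _ _) (le_max_left _ _)
  have hab : a ≤ b := by rw [ha, hb]; linarith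
  obtain ⟨C, hC⟩ : ∃ C, ∀ x ∈ Icc a b, ‖A x‖ ≤ C :=
    isCompact_Icc.exists_bound_of_continuousOn hA.continuousOn
  set K : NNReal := ⟨(n : ℝ) * max C 0, by positivity⟩ with hKdef
  set v : ℝ → Matrix (Fin n) (Fin n) ℝ → Matrix (Fin n) (Fin n) ℝ :=
    fun τ X => A (max a (min τ b)) * X with hv_def
  have hv : ∀ τ, LipschitzOnWith K (v τ) univ := by
    intro τ
    apply LipschitzWith.lipschitzOnWith
    apply LipschitzWith.of_dist_le_mul
    intro X Y
    have hmem : max a (min τ b) ∈ Icc a b := ⟨le_max_left _ _, max_le hab (min_le_right _ _)⟩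
    rw [dist_eq_norm, dist_eq_norm]
    have hsub : v τ X - v τ Y = A (max a (min τ b)) * (X - Y) := by
      rw [hv_def]; simp only; rw [Matrix.mul_sub]
    rw [hsub]
    have hK : (K : ℝ) = (n : ℝ) * max C 0 := rfl
    rw [hK]
    set B := A (max a (min τ b)) with hB
    set Z := X - Y with hZ
    apply (Matrix.norm_le_iff (by positivity)).2
    intro i j
    rw [Matrix.mul_apply]
    calc ‖∑ k, B i k * Z k j‖ ≤ ∑ k, ‖B i k * Z k j‖ := norm_sum_le _ _
      _ ≤ ∑ _k : Fin n, max C 0 * ‖Z‖ := by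
          apply Finset.sum_le_sum
          intro k _
          rw [norm_mul]
          exact mul_le_mul
            (le_trans (Matrix.norm_entry_le_entrywise_sup_norm B)
              (le_trans (hC _ hmem) (le_max_left _ _)))
            (Matrix.norm_entry_le_entrywise_sup_norm Z) (norm_nonneg _)
            (le_max_right _ _)
      _ = (n : ℝ) * max C 0 * ‖Z‖ := by
          rw [Finset.sum_const, Finset.card_univ, Fintype.card_fin, nsmul_eq_mul, mul_assoc]
  have hf' : ∀ τ, HasDerivAt (fun u => Φ u s0) (A τ * Φ τ s0) τ :=
    fun τ => hasDerivAt_matrix.2 (hΦderiv s0 τ)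
  have hg' : ∀ τ, HasDerivAt (fun u => Φ u t₀ * Φ t₀ s0) (A τ * (Φ τ t₀ * Φ t₀ s0)) τ := by
    intro τ
    apply hasDerivAt_matrix.2
    intro i j
    have h0 : HasDerivAt (fun u => ∑ k, Φ u t₀ i k * Φ t₀ s0 k j)
        (∑ k, (A τ * Φ τ t₀) i k * Φ t₀ s0 k j) τ :=
      HasDerivAt.fun_sum fun k _ => (hΦderiv t₀ τ i k).mul_const _
    have h1 : (fun u => (Φ u t₀ * Φ t₀ s0) i j) = fun u => ∑ k, Φ u t₀ i k * Φ t₀ s0 k j := by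
      funext u; rw [Matrix.mul_apply]
    have h2 : (A τ * (Φ τ t₀ * Φ t₀ s0)) i j = ∑ k, (A τ * Φ τ t₀) i k * Φ t₀ s0 k j := by
      rw [← Matrix.mul_assoc, Matrix.mul_apply]
    rw [h1, h2]; exact h0
  have ht₀ : t₀ ∈ Ioo a b := by
    constructor
    · rw [ha]; have := min_le_left t₀ t1; linarith
    · rw [hb]; have := le_max_left t₀ t1; linarith
  have ht1 : t1 ∈ Icc a b := by
    constructor
    · rw [ha]; have := min_le_right t₀ t1; linarith
    · rw [hb]; have := le_max_right t₀ t1; linarith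
  have hvf : ∀ τ, τ ∈ Ioo a b → v τ (Φ τ s0) = A τ * Φ τ s0 := by
    intro τ hτ
    rw [hv_def]; simp only
    rw [min_eq_left hτ.2.le, max_eq_right hτ.1.le]
  have hvg : ∀ τ, τ ∈ Ioo a b → v τ (Φ τ t₀ * Φ t₀ s0) = A τ * (Φ τ t₀ * Φ t₀ s0) := by
    intro τ hτ
    rw [hv_def]; simp only
    rw [min_eq_left hτ.2.le, max_eq_right hτ.1.le]
  have heqon : EqOn (fun u => Φ u s0) (fun u => Φ u t₀ * Φ t₀ s0) (Icc a b) := by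
    apply ODE_solution_unique_of_mem_Icc (fun τ _ => hv τ) ht₀
    · exact fun τ _ => (hf' τ).continuousAt.continuousWithinAt
    · intro τ hτ; rw [hvf τ hτ]; exact hf' τ
    · exact fun τ _ => trivial
    · exact fun τ _ => (hg' τ).continuousAt.continuousWithinAt
    · intro τ hτ; rw [hvg τ hτ]; exact hg' τ
    · exact fun τ _ => trivial
    · show Φ t₀ s0 = Φ t₀ t₀ * Φ t₀ s0
      rw [hΦid, one_mul]
  exact heqon ht1


theorem covprop_tri {n : ℕ} (M N X : Matrix (Fin n) (Fin n) ℝ) (i j : Fin n) :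
    (M * X * Nᵀ) i j = ∑ l, ∑ k, M i k * X k l * N j l := by
  simp [Matrix.mul_apply, Matrix.transpose_apply, Finset.sum_mul]

theorem covprop_main {n m : ℕ}
    (A : ℝ → Matrix (Fin n) (Fin n) ℝ) (_hA : Continuous A)
    (σ : Matrix (Fin n) (Fin m) ℝ) (t₀ : ℝ) (P₀ : Matrix (Fin n) (Fin n) ℝ)
    (Φ : ℝ → ℝ → Matrix (Fin n) (Fin n) ℝ)
    (hΦcont : Continuous fun p : ℝ × ℝ => Φ p.1 p.2)
    (hΦderiv : ∀ s t, ∀ i j : Fin n,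
      HasDerivAt (fun τ => Φ τ s i j) ((A t * Φ t s) i j) t)
    (hΦid : ∀ s : ℝ, Φ s s = 1)
    (key : ∀ t1 s0 : ℝ, Φ t1 s0 = Φ t1 t₀ * Φ t₀ s0)
    (P : ℝ → Matrix (Fin n) (Fin n) ℝ)
    (hP : ∀ t, ∀ i j : Fin n, P t i j = (Φ t t₀ * P₀ * (Φ t t₀)ᵀ) i j
        + ∫ s in t₀..t, (Φ t s * (σ * σᵀ) * (Φ t s)ᵀ) i j) :
    (∀ t, ∀ i j : Fin n,
      HasDerivAt (fun τ => P τ i j)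
        ((A t * P t + P t * (A t)ᵀ + σ * σᵀ) i j) t) := by
  set g : ℝ → Matrix (Fin n) (Fin n) ℝ :=
    fun s => Φ t₀ s * (σ * σᵀ) * (Φ t₀ s)ᵀ with hg_def
  have hΦt₀cont : Continuous fun s => Φ t₀ s :=
    hΦcont.comp (continuous_const.prodMk continuous_id)
  have hgc : Continuous g :=
    (hΦt₀cont.matrix_mul continuous_const).matrix_mul hΦt₀cont.matrix_transpose
  have hgc_e : ∀ k l, Continuous fun s => g s k l :=
    fun k l => (continuous_apply l).comp ((continuous_apply k).comp hgc)
  set c : ℝ → Matrix (Fin n) (Fin n) ℝ :=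
    fun t => Matrix.of fun k l => P₀ k l + ∫ s in t₀..t, g s k l with hc_def
  -- factorization of P
  have hPfact : ∀ t, P t = Φ t t₀ * c t * (Φ t t₀)ᵀ := by
    intro t
    ext i j
    rw [hP t i j, covprop_tri (Φ t t₀) (Φ t t₀) P₀ i j,
      covprop_tri (Φ t t₀) (Φ t t₀) (c t) i j]
    have h1 : ∀ s : ℝ, (Φ t s * (σ * σᵀ) * (Φ t s)ᵀ) i j
        = ∑ l, ∑ k, Φ t t₀ i k * g s k l * Φ t t₀ j l := by
      intro s
      have h2 : Φ t s * (σ * σᵀ) * (Φ t s)ᵀ = Φ t t₀ * g s * (Φ t t₀)ᵀ := by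
        rw [key t s, hg_def]
        simp only [Matrix.transpose_mul, Matrix.mul_assoc]
      rw [h2, covprop_tri]
    have hcont2 : ∀ l, Continuous fun s => ∑ k, Φ t t₀ i k * g s k l * Φ t t₀ j l :=
      fun l => continuous_finset_sum _ fun k _ => (continuous_const.mul (hgc_e k l)).mul continuous_const
    have hint : (∫ s in t₀..t, (Φ t s * (σ * σᵀ) * (Φ t s)ᵀ) i j)
        = ∑ l, ∑ k, Φ t t₀ i k * (∫ s in t₀..t, g s k l) * Φ t t₀ j l := by
      simp_rw [h1]
      rw [intervalIntegral.integral_finset_sum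
        (fun l _ => ((hcont2 l).intervalIntegrable _ _))]
      refine Finset.sum_congr rfl fun l _ => ?_
      rw [intervalIntegral.integral_finset_sum (f := fun k s => Φ t t₀ i k * g s k l * Φ t t₀ j l)
        (fun k _ => ((((continuous_const.mul (hgc_e k l)).mul continuous_const :
          Continuous fun s => Φ t t₀ i k * g s k l * Φ t t₀ j l)).intervalIntegrable _ _))]
      refine Finset.sum_congr rfl fun k _ => ?_
      rw [intervalIntegral.integral_mul_const, intervalIntegral.integral_const_mul]
    rw [hint, ← Finset.sum_add_distrib]
    refine Finset.sum_congr rfl fun l _ => ?_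
    rw [← Finset.sum_add_distrib]
    refine Finset.sum_congr rfl fun k _ => ?_
    rw [hc_def]
    simp only [Matrix.of_apply]
    ring
  -- derivatives of the pieces
  have hcderiv : ∀ t k l, HasDerivAt (fun τ => c τ k l) (g t k l) t := by
    intro t k l
    have h0 : HasDerivAt (fun τ => ∫ s in t₀..τ, g s k l) (g t k l) t :=
      intervalIntegral.integral_hasDerivAt_right ((hgc_e k l).intervalIntegrable _ _)
        ((hgc_e k l).stronglyMeasurable.stronglyMeasurableAtFilter)
        (hgc_e k l).continuousAt
    have := (hasDerivAt_const t (P₀ k l)).fun_add h0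
    rw [zero_add] at this
    exact this
  intro t i j
  have h1 : HasDerivAt (fun τ => ∑ l, ∑ k, Φ τ t₀ i k * c τ k l * Φ τ t₀ j l)
      (∑ l, ∑ k, (((A t * Φ t t₀) i k * c t k l + Φ t t₀ i k * g t k l) * Φ t t₀ j l
        + Φ t t₀ i k * c t k l * (A t * Φ t t₀) j l)) t :=
    HasDerivAt.fun_sum fun l _ => HasDerivAt.fun_sum fun k _ =>
      ((hΦderiv t₀ t i k).mul (hcderiv t k l)).mul (hΦderiv t₀ t j l)
  have h2 : HasDerivAt (fun τ => P τ i j)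
      (∑ l, ∑ k, (((A t * Φ t t₀) i k * c t k l + Φ t t₀ i k * g t k l) * Φ t t₀ j l
        + Φ t t₀ i k * c t k l * (A t * Φ t t₀) j l)) t := by
    apply h1.congr_of_eventuallyEq
    apply Filter.Eventually.of_forall
    intro τ
    show P τ i j = _
    rw [hPfact τ, covprop_tri]
  -- now rewrite the target value
  have hMinv : Φ t t₀ * Φ t₀ t = 1 := by rw [← key t t, hΦid]
  have e1 : A t * P t = (A t * Φ t t₀) * c t * (Φ t t₀)ᵀ := by
    rw [hPfact t]; simp only [Matrix.mul_assoc]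
  have e2 : P t * (A t)ᵀ = Φ t t₀ * c t * (A t * Φ t t₀)ᵀ := by
    rw [hPfact t, Matrix.transpose_mul]; simp only [Matrix.mul_assoc]
  have e3 : (σ * σᵀ : Matrix (Fin n) (Fin n) ℝ) = Φ t t₀ * g t * (Φ t t₀)ᵀ := by
    have h4 : Φ t t₀ * g t * (Φ t t₀)ᵀ
        = (Φ t t₀ * Φ t₀ t) * (σ * σᵀ) * (Φ t t₀ * Φ t₀ t)ᵀ := by
      rw [hg_def]
      simp only [Matrix.transpose_mul, Matrix.mul_assoc]
    rw [h4, hMinv]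
    simp
  have hval : (A t * P t + P t * (A t)ᵀ + σ * σᵀ) i j
      = ∑ l, ∑ k, (((A t * Φ t t₀) i k * c t k l + Φ t t₀ i k * g t k l) * Φ t t₀ j l
        + Φ t t₀ i k * c t k l * (A t * Φ t t₀) j l) := by
    rw [Matrix.add_apply, Matrix.add_apply, e1, e2, e3,
      covprop_tri ((A t * Φ t t₀)) (Φ t t₀) (c t) i j,
      covprop_tri (Φ t t₀) (A t * Φ t t₀) (c t) i j,
      covprop_tri (Φ t t₀) (Φ t t₀) (g t) i j,
      ← Finset.sum_add_distrib, ← Finset.sum_add_distrib]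
    refine Finset.sum_congr rfl fun l _ => ?_
    rw [← Finset.sum_add_distrib, ← Finset.sum_add_distrib]
    refine Finset.sum_congr rfl fun k _ => ?_
    ring
  rw [hval]
  exact h2

/-- Covariance propagation: `P(t) = Φ(t,t₀) P₀ Φ(t,t₀)ᵀ + ∫_{t₀}^t Φ(t,s) σσᵀ Φ(t,s)ᵀ ds`
solves the Lyapunov matrix differential equation
`P'(t) = A(t) P(t) + P(t) A(t)ᵀ + σσᵀ` with `P(t₀) = P₀`. -/
theorem covariance_propagation_lyapunov {n m : ℕ}
    (A : ℝ → Matrix (Fin n) (Fin n) ℝ) (hA : Continuous A)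
    (σ : Matrix (Fin n) (Fin m) ℝ) (t₀ : ℝ) (P₀ : Matrix (Fin n) (Fin n) ℝ)
    (Φ : ℝ → ℝ → Matrix (Fin n) (Fin n) ℝ)
    (hΦcont : Continuous fun p : ℝ × ℝ => Φ p.1 p.2)
    (hΦderiv : ∀ s t, ∀ i j : Fin n,
      HasDerivAt (fun τ => Φ τ s i j) ((A t * Φ t s) i j) t)
    (hΦid : ∀ s : ℝ, Φ s s = 1)
    (P : ℝ → Matrix (Fin n) (Fin n) ℝ)
    (hP : ∀ t, ∀ i j : Fin n, P t i j = (Φ t t₀ * P₀ * (Φ t t₀)ᵀ) i j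
        + ∫ s in t₀..t, (Φ t s * (σ * σᵀ) * (Φ t s)ᵀ) i j) :
    (∀ t, ∀ i j : Fin n, DifferentiableAt ℝ (fun τ => P τ i j) t) ∧
    P t₀ = P₀ ∧
    (∀ t, ∀ i j : Fin n,
      HasDerivAt (fun τ => P τ i j)
        ((A t * P t + P t * (A t)ᵀ + σ * σᵀ) i j) t) := by
  have key := phi_factor A hA t₀ Φ hΦderiv hΦid
  have h3 := covprop_main A hA σ t₀ P₀ Φ hΦcont hΦderiv hΦid key P hP
  refine ⟨fun t i j => (h3 t i j).differentiableAt, ?_, h3⟩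
  ext i j
  rw [hP t₀ i j]
  simp [hΦid, intervalIntegral.integral_same]
end

section
/- Let f : ℝⁿ × ℝᵐ → ℝⁿ and g : ℝⁿ × ℝᵐ → ℝᵐ be continuously differentiable, let γ ∈ ℝ, and let (x₀, y₀) satisfy g(x₀, y₀) = 0 with the partial derivative D_y g(x₀, y₀) : ℝᵐ → ℝᵐ invertible. Then there exist h₀ > 0, an open neighborhood V of x₀ in ℝⁿ, and continuously differentiable maps X : (−h₀, h₀) × V → ℝⁿ and Y : (−h₀, h₀) × V → ℝᵐ with X(0, x₀) = x₀ and Y(0, x₀) = y₀ such that for all (h, ψ) ∈ (−h₀, h₀) × V the ESDIRK stage equations hold: X(h,ψ) − h·γ·f(X(h,ψ), Y(h,ψ)) − ψ = 0 and g(X(h,ψ), Y(h,ψ)) = 0. -/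
open Set

/-- Augmented state space for the ESDIRK stage map. -/
abbrev EsdirkSpace (n m : ℕ) : Type :=
  (ℝ × (Fin n → ℝ)) × ((Fin n → ℝ) × (Fin m → ℝ))

/-- Local solvability of the ESDIRK stage equations
`X − hγ f(X,Y) − ψ = 0`, `g(X,Y) = 0` for an index-1 semi-explicit DAE:
the stage values `X(h,ψ)`, `Y(h,ψ)` exist as `C¹` functions of the step size
`h` and the accumulated contribution `ψ`, near `h = 0`, `ψ = x₀`. -/
theorem esdirk_stage_equations_solvable {n m : ℕ}
    (f : (Fin n → ℝ) × (Fin m → ℝ) → (Fin n → ℝ))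
    (g : (Fin n → ℝ) × (Fin m → ℝ) → (Fin m → ℝ))
    (hf : ContDiff ℝ 1 f) (hg : ContDiff ℝ 1 g)
    (γ : ℝ) (x₀ : Fin n → ℝ) (y₀ : Fin m → ℝ)
    (hg0 : g (x₀, y₀) = 0)
    (gy : (Fin m → ℝ) ≃L[ℝ] (Fin m → ℝ))
    (hgy : (gy : (Fin m → ℝ) →L[ℝ] (Fin m → ℝ))
      = (fderiv ℝ g (x₀, y₀)).comp (ContinuousLinearMap.inr ℝ (Fin n → ℝ) (Fin m → ℝ))) :
    ∃ h₀ > (0 : ℝ), ∃ V : Set (Fin n → ℝ), IsOpen V ∧ x₀ ∈ V ∧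
      ∃ X : ℝ × (Fin n → ℝ) → (Fin n → ℝ), ∃ Y : ℝ × (Fin n → ℝ) → (Fin m → ℝ),
        ContDiffOn ℝ 1 X (Set.Ioo (-h₀) h₀ ×ˢ V) ∧
        ContDiffOn ℝ 1 Y (Set.Ioo (-h₀) h₀ ×ˢ V) ∧
        X (0, x₀) = x₀ ∧ Y (0, x₀) = y₀ ∧
        ∀ h ∈ Set.Ioo (-h₀) h₀, ∀ ψ ∈ V,
          X (h, ψ) - (h * γ) • f (X (h, ψ), Y (h, ψ)) - ψ = 0 ∧
          g (X (h, ψ), Y (h, ψ)) = 0 := by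
  classical
  set Φ : EsdirkSpace n m → EsdirkSpace n m := fun p => (p.1, (p.2.1 - (p.1.1 * γ) • f p.2 - p.1.2, g p.2)) with hΦdef
  -- Φ is C¹
  have hΦc : ContDiff ℝ 1 Φ := by
    apply ContDiff.prodMk contDiff_fst
    apply ContDiff.prodMk
    · exact ((contDiff_snd.fst).sub
        ((contDiff_fst.fst.mul contDiff_const).smul (hf.comp contDiff_snd))).sub
        contDiff_fst.snd
    · exact hg.comp contDiff_snd
  -- explicit derivative of Φ at q₀
  have hfd : HasFDerivAt f (fderiv ℝ f (x₀, y₀)) (x₀, y₀) :=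
    (hf.differentiable one_ne_zero (x₀, y₀)).hasFDerivAt
  have hgd : HasFDerivAt g (fderiv ℝ g (x₀, y₀)) (x₀, y₀) :=
    (hg.differentiable one_ne_zero (x₀, y₀)).hasFDerivAt
  have h2 : HasFDerivAt (fun p : EsdirkSpace n m => p.2.1)
      ((ContinuousLinearMap.fst ℝ _ _).comp (ContinuousLinearMap.snd ℝ _ _))
      ((((0 : ℝ), x₀), (x₀, y₀)) : EsdirkSpace n m) :=
    (hasFDerivAt_snd).fst
  have h3 : HasFDerivAt (fun p : EsdirkSpace n m => p.1.1 * γ)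
      (γ • ((ContinuousLinearMap.fst ℝ ℝ _).comp (ContinuousLinearMap.fst ℝ _ _)))
      ((((0 : ℝ), x₀), (x₀, y₀)) : EsdirkSpace n m) :=
    (hasFDerivAt_fst).fst.mul_const γ
  have h4 : HasFDerivAt (fun p : EsdirkSpace n m => f p.2)
      ((fderiv ℝ f (x₀, y₀)).comp (ContinuousLinearMap.snd ℝ _ _))
      ((((0 : ℝ), x₀), (x₀, y₀)) : EsdirkSpace n m) :=
    HasFDerivAt.comp _ hfd hasFDerivAt_snd
  have h5 := h3.smul h4
  have h6 := (h2.sub h5).sub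
    ((hasFDerivAt_fst (p := ((((0 : ℝ), x₀), (x₀, y₀)) : EsdirkSpace n m))).snd)
  have h7 : HasFDerivAt (fun p : EsdirkSpace n m => g p.2)
      ((fderiv ℝ g (x₀, y₀)).comp (ContinuousLinearMap.snd ℝ _ _))
      ((((0 : ℝ), x₀), (x₀, y₀)) : EsdirkSpace n m) :=
    HasFDerivAt.comp _ hgd hasFDerivAt_snd
  have hL := HasFDerivAt.prodMk (hasFDerivAt_fst (p := ((((0 : ℝ), x₀), (x₀, y₀)) : EsdirkSpace n m))) (h6.prodMk h7)
  have hΦq : HasFDerivAt Φ (fderiv ℝ Φ (((0, x₀), (x₀, y₀)) : EsdirkSpace n m)) (((0, x₀), (x₀, y₀)) : EsdirkSpace n m) :=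
    (hΦc.differentiable one_ne_zero _).hasFDerivAt
  have hLeq := hL.unique hΦq
  -- the derivative is injective
  have hinj : Function.Injective (fderiv ℝ Φ (((0, x₀), (x₀, y₀)) : EsdirkSpace n m)) := by
    rw [injective_iff_map_eq_zero]
    rintro ⟨⟨a, b⟩, ⟨c, d⟩⟩ hv
    rw [← hLeq] at hv
    have ha : a = 0 := by simpa using congrArg (fun z : EsdirkSpace n m => z.1.1) hv
    have hb : b = 0 := by simpa using congrArg (fun z : EsdirkSpace n m => z.1.2) hv
    have hc : c = 0 := by
      have h := congrArg (fun z : EsdirkSpace n m => z.2.1) hv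
      simp only [ha, hb] at h
      simp at h
      exact h
    have hd : d = 0 := by
      have h := congrArg (fun z : EsdirkSpace n m => z.2.2) hv
      simp only [ContinuousLinearMap.prod_apply, ContinuousLinearMap.coe_comp',
        Function.comp_apply, ContinuousLinearMap.coe_snd', ContinuousLinearMap.coe_fst',
        Prod.snd_zero, Prod.fst_zero] at h
      have h' : (fderiv ℝ g (x₀, y₀)) ((0 : Fin n → ℝ), d) = 0 := by
        rw [← hc]; exact h
      have hgyd : gy d = 0 := by
        rw [← ContinuousLinearEquiv.coe_coe, hgy]
        simpa [ContinuousLinearMap.inr_apply] using h'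
      have := gy.injective (a₁ := d) (a₂ := 0) (by simpa using hgyd)
      exact this
    simp [ha, hb, hc, hd, Prod.ext_iff]
  -- upgrade the derivative to a continuous linear equivalence
  have hbij : Function.Bijective
      ((fderiv ℝ Φ (((0, x₀), (x₀, y₀)) : EsdirkSpace n m)) :
        EsdirkSpace n m →ₗ[ℝ] EsdirkSpace n m) :=
    ⟨hinj, LinearMap.injective_iff_surjective.mp hinj⟩
  set eqc := (LinearEquiv.ofBijective _ hbij).toContinuousLinearEquiv with heqcdef
  have heqc : (eqc : EsdirkSpace n m →L[ℝ] EsdirkSpace n m)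
      = fderiv ℝ Φ (((0, x₀), (x₀, y₀)) : EsdirkSpace n m) :=
    ContinuousLinearMap.ext fun v => rfl
  have hΦq' : HasFDerivAt Φ (eqc : EsdirkSpace n m →L[ℝ] EsdirkSpace n m)
      (((0, x₀), (x₀, y₀)) : EsdirkSpace n m) := by rw [heqc]; exact hΦq
  have hΦat : ContDiffAt ℝ 1 Φ (((0, x₀), (x₀, y₀)) : EsdirkSpace n m) := hΦc.contDiffAt
  set Ψ := hΦat.localInverse hΦq' one_ne_zero with hΨdef
  have hΨc : ContDiffAt ℝ 1 Ψ (Φ (((0, x₀), (x₀, y₀)) : EsdirkSpace n m)) :=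
    hΦat.to_localInverse hΦq' one_ne_zero
  have hΨ0 : Ψ (Φ (((0, x₀), (x₀, y₀)) : EsdirkSpace n m))
      = (((0, x₀), (x₀, y₀)) : EsdirkSpace n m) :=
    hΦat.localInverse_apply_image hΦq' one_ne_zero
  have hri : ∀ᶠ q in nhds (Φ (((0, x₀), (x₀, y₀)) : EsdirkSpace n m)), Φ (Ψ q) = q :=
    (hΦat.hasStrictFDerivAt' hΦq' one_ne_zero).eventually_right_inverse
  have hΦ0 : Φ (((0, x₀), (x₀, y₀)) : EsdirkSpace n m) = (((0 : ℝ), x₀), (0, 0)) := by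
    simp [hΦdef, hg0]
  rw [hΦ0] at hΨc hΨ0 hri
  -- compose with the affine embedding q ↦ (q, 0)
  set j : ℝ × (Fin n → ℝ) → EsdirkSpace n m := fun q => ((q.1, q.2), (0, 0)) with hjdef
  have hjc : ContDiff ℝ 1 j := (contDiff_fst.prodMk contDiff_snd).prodMk contDiff_const
  have hj0 : j (0, x₀) = (((0 : ℝ), x₀), (0, 0)) := rfl
  set X : ℝ × (Fin n → ℝ) → (Fin n → ℝ) := fun q => (Ψ (j q)).2.1 with hXdef
  set Y : ℝ × (Fin n → ℝ) → (Fin m → ℝ) := fun q => (Ψ (j q)).2.2 with hYdef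
  have hΨj : ContDiffAt ℝ 1 (fun q => Ψ (j q)) ((0 : ℝ), x₀) := by
    have h2 : ContDiffAt ℝ 1 Ψ (j ((0 : ℝ), x₀)) := by rw [hj0]; exact hΨc
    exact h2.comp _ hjc.contDiffAt
  have hXc : ContDiffAt ℝ 1 X ((0 : ℝ), x₀) :=
    ((contDiff_snd.fst).contDiffAt).comp _ hΨj
  have hYc : ContDiffAt ℝ 1 Y ((0 : ℝ), x₀) :=
    ((contDiff_snd.snd).contDiffAt).comp _ hΨj
  obtain ⟨u1, hu1, hXu⟩ := hXc.contDiffOn le_rfl (by simp)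
  obtain ⟨u2, hu2, hYu⟩ := hYc.contDiffOn le_rfl (by simp)
  have hri' : ∀ᶠ q in nhds ((0 : ℝ), x₀), Φ (Ψ (j q)) = j q := by
    have hcj : ContinuousAt j ((0 : ℝ), x₀) := hjc.continuous.continuousAt
    rw [← hj0] at hri
    exact hcj.eventually hri
  obtain ⟨ε, hε, hball⟩ : ∃ ε > 0,
      Metric.ball (((0 : ℝ), x₀)) ε ⊆ u1 ∩ u2 ∩ {q | Φ (Ψ (j q)) = j q} := by
    refine Metric.mem_nhds_iff.mp ?_
    exact Filter.inter_mem (Filter.inter_mem hu1 hu2) hri'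
  have hsub : Set.Ioo (-ε) ε ×ˢ Metric.ball x₀ ε ⊆ Metric.ball (((0 : ℝ), x₀)) ε := by
    rintro ⟨h, ψ⟩ ⟨hh, hψ⟩
    rw [Metric.mem_ball, Prod.dist_eq]
    refine max_lt ?_ (Metric.mem_ball.mp hψ)
    rw [Real.dist_eq, sub_zero]
    exact abs_lt.mpr ⟨hh.1, hh.2⟩
  refine ⟨ε, hε, Metric.ball x₀ ε, Metric.isOpen_ball, Metric.mem_ball_self hε, X, Y,
    hXu.mono (fun q hq => (hball (hsub hq)).1.1),
    hYu.mono (fun q hq => (hball (hsub hq)).1.2), ?_, ?_, ?_⟩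
  · show (Ψ (j ((0 : ℝ), x₀))).2.1 = x₀
    rw [hj0, hΨ0]
  · show (Ψ (j ((0 : ℝ), x₀))).2.2 = y₀
    rw [hj0, hΨ0]
  · intro h hh ψ hψ
    have heq : Φ (Ψ (j (h, ψ))) = j (h, ψ) :=
      (hball (hsub (Set.mem_prod.mpr ⟨hh, hψ⟩))).2
    set w := Ψ (j (h, ψ)) with hwdef
    have hw1 : w.1 = (h, ψ) := congrArg Prod.fst heq
    have hw21 : w.2.1 - (w.1.1 * γ) • f w.2 - w.1.2 = 0 :=
      congrArg (fun z : EsdirkSpace n m => z.2.1) heq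
    have hw22 : g w.2 = 0 := congrArg (fun z : EsdirkSpace n m => z.2.2) heq
    have hXw : X (h, ψ) = w.2.1 := rfl
    have hYw : Y (h, ψ) = w.2.2 := rfl
    have hfw : (X (h, ψ), Y (h, ψ)) = w.2 := by rw [hXw, hYw]
    constructor
    · rw [hXw, hfw]
      rw [hw1] at hw21
      simpa using hw21
    · rw [hfw]; exact hw22
end
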